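/- Let {A_j} be a Parseval operator-valued frame and R ∈ B(H_o) a unitary. Then {RA_j} is right-similar to {A_j} if and only if (I⊗R)P_A = P_A(I⊗R), i.e., I⊗R commutes with the frame projection P_A. -/

import Mathlib

/-!
Because the `L j` are isometries with orthogonal ranges summing to the identity, `A j = L j* θ`
and `L j* (I⊗R) = R L j*`; so `R A j = A j T` for all `j` exactly when `(I⊗R) θ = θ T`, and
`I⊗R` is unitary. If `U θ = θ T` with `T` invertible and `U` unitary, then also `U* θ = θ T⁻¹`:
the range of `P_A = θ θ*` is invariant under `U` and `U*`, hence reducing, i.e. `U P_A = P_A U`.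
Conversely, if `U` commutes with `P_A`, then `T = θ* U θ` satisfies `θ T = P_A U θ = U θ`, and it
is invertible with inverse `θ* U* θ`.
-/

open ContinuousLinearMap

section Decomposition

variable {E F : Type*}
  [NormedAddCommGroup E] [InnerProductSpace ℂ E] [CompleteSpace E]
  [NormedAddCommGroup F] [InnerProductSpace ℂ F] [CompleteSpace F]
  {J : Type*} {L : J → E →L[ℂ] F}

theorem adjoint_apply_eq_of_hasSum
    (hL1 : ∀ j, adjoint (L j) ∘L L j = 1) (hL0 : ∀ i j, i ≠ j → adjoint (L i) ∘L L j = 0)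
    {x : J → E} {y : F} (hy : HasSum (fun i => L i (x i)) y) (j : J) :
    adjoint (L j) y = x j := by
  refine (hy.mapL (adjoint (L j))).unique ?_
  convert hasSum_single (f := fun i => adjoint (L j) (L i (x i))) j
    (fun i hi => congr($(hL0 j i (Ne.symm hi)) (x i))) using 1
  exact congr($(hL1 j) (x j)).symm

theorem ext_of_forall_adjoint_comp {G : Type*} [NormedAddCommGroup G] [InnerProductSpace ℂ G]
    (hLsum : ∀ y : F, HasSum (fun j => L j (adjoint (L j) y)) y) {U V : G →L[ℂ] F}
    (h : ∀ j, adjoint (L j) ∘L U = adjoint (L j) ∘L V) : U = V := by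
  ext x
  refine (hLsum (U x)).unique ?_
  simpa only [← comp_apply, h] using hLsum (V x)

theorem ext_of_forall_comp {G : Type*} [NormedAddCommGroup G] [InnerProductSpace ℂ G]
    (hLsum : ∀ y : F, HasSum (fun j => L j (adjoint (L j) y)) y) {U V : F →L[ℂ] G}
    (h : ∀ j, U ∘L L j = V ∘L L j) : U = V := by
  ext y
  refine ((hLsum y).mapL U).unique ?_
  convert (hLsum y).mapL V using 1
  exact funext fun j => congr($(h j) _)

theorem adjoint_comp_eq_of_comp_eq
    (hL1 : ∀ j, adjoint (L j) ∘L L j = 1) (hL0 : ∀ i j, i ≠ j → adjoint (L i) ∘L L j = 0)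
    (hLsum : ∀ y : F, HasSum (fun j => L j (adjoint (L j) y)) y)
    {S : F →L[ℂ] F} {B : E →L[ℂ] E} (h : ∀ j, S ∘L L j = L j ∘L B) (j : J) :
    adjoint (L j) ∘L S = B ∘L adjoint (L j) := by
  ext y
  show adjoint (L j) (S y) = B (adjoint (L j) y)
  refine adjoint_apply_eq_of_hasSum hL1 hL0 (x := fun i => B (adjoint (L i) y)) ?_ j
  convert (hLsum y).mapL S using 1
  exact funext fun i => congr($(h i) _).symm

theorem mem_unitary_of_comp_eq
    (hL1 : ∀ j, adjoint (L j) ∘L L j = 1) (hL0 : ∀ i j, i ≠ j → adjoint (L i) ∘L L j = 0)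
    (hLsum : ∀ y : F, HasSum (fun j => L j (adjoint (L j) y)) y)
    {S : F →L[ℂ] F} {B : E →L[ℂ] E} (hB : B ∈ unitary (E →L[ℂ] E))
    (h : ∀ j, S ∘L L j = L j ∘L B) : S ∈ unitary (F →L[ℂ] F) := by
  have hadj (j : J) : adjoint S ∘L L j = L j ∘L adjoint B := by
    simpa only [adjoint_comp, adjoint_adjoint] using
      congrArg adjoint (adjoint_comp_eq_of_comp_eq hL1 hL0 hLsum h j)
  refine Unitary.mem_iff.2 ⟨?_, ?_⟩ <;> refine ext_of_forall_comp hLsum fun j => ?_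
  · calc adjoint S ∘L S ∘L L j = L j ∘L (adjoint B ∘L B) := by
          rw [h, ← comp_assoc, hadj, comp_assoc]
      _ = 1 ∘L L j := by rw [show adjoint B ∘L B = 1 from Unitary.star_mul_self_of_mem hB]; rfl
  · calc S ∘L adjoint S ∘L L j = L j ∘L (B ∘L adjoint B) := by
          rw [hadj, ← comp_assoc, h, comp_assoc]
      _ = 1 ∘L L j := by rw [show B ∘L adjoint B = 1 from Unitary.mul_star_self_of_mem hB]; rfl

end Decomposition

section Frame

variable {H H₀ K : Type*}
  [NormedAddCommGroup H] [InnerProductSpace ℂ H]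
  [NormedAddCommGroup H₀] [InnerProductSpace ℂ H₀] [CompleteSpace H₀]
  [NormedAddCommGroup K] [InnerProductSpace ℂ K] [CompleteSpace K]
  {J : Type*} {L : J → H₀ →L[ℂ] K}

theorem eq_adjoint_comp_of_hasSum
    (hL1 : ∀ j, adjoint (L j) ∘L L j = 1) (hL0 : ∀ i j, i ≠ j → adjoint (L i) ∘L L j = 0)
    {A : J → H →L[ℂ] H₀} {θ : H →L[ℂ] K} (hθ : ∀ x, HasSum (fun j => L j (A j x)) (θ x))
    (j : J) : A j = adjoint (L j) ∘L θ := by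
  ext x
  exact (adjoint_apply_eq_of_hasSum hL1 hL0 (hθ x) j).symm

theorem comp_eq_comp_iff_forall_comp_eq
    (hL1 : ∀ j, adjoint (L j) ∘L L j = 1) (hL0 : ∀ i j, i ≠ j → adjoint (L i) ∘L L j = 0)
    (hLsum : ∀ y : K, HasSum (fun j => L j (adjoint (L j) y)) y)
    {A : J → H →L[ℂ] H₀} {θ : H →L[ℂ] K} (hθ : ∀ x, HasSum (fun j => L j (A j x)) (θ x))
    {R : H₀ →L[ℂ] H₀} {S : K →L[ℂ] K} (hS : ∀ j, S ∘L L j = L j ∘L R) (T : H →L[ℂ] H) :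
    S ∘L θ = θ ∘L T ↔ ∀ j, R ∘L A j = A j ∘L T := by
  have key (j : J) :
      adjoint (L j) ∘L (S ∘L θ) = adjoint (L j) ∘L (θ ∘L T) ↔ R ∘L A j = A j ∘L T := by
    simp only [eq_adjoint_comp_of_hasSum hL1 hL0 hθ j, ← comp_assoc,
      adjoint_comp_eq_of_comp_eq hL1 hL0 hLsum hS j]
  simp only [← key]
  exact ⟨fun h j => by rw [h], ext_of_forall_adjoint_comp hLsum⟩

end Frame

section RangeProjection

variable {E K : Type*}
  [NormedAddCommGroup E] [InnerProductSpace ℂ E] [CompleteSpace E]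
  [NormedAddCommGroup K] [InnerProductSpace ℂ K] [CompleteSpace K]
  {θ : E →L[ℂ] K}

theorem proj_comp_comp_proj_of_comp_eq (hθ : adjoint θ ∘L θ = 1) {U : K →L[ℂ] K}
    {T : E →L[ℂ] E} (h : U ∘L θ = θ ∘L T) :
    (θ ∘L adjoint θ) ∘L U ∘L (θ ∘L adjoint θ) = U ∘L (θ ∘L adjoint θ) := by
  calc (θ ∘L adjoint θ) ∘L U ∘L (θ ∘L adjoint θ) = θ ∘L (adjoint θ ∘L θ) ∘L T ∘L adjoint θ := by
        simp only [← comp_assoc, h]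
    _ = U ∘L (θ ∘L adjoint θ) := by rw [hθ, one_def, id_comp, ← comp_assoc, ← h, comp_assoc]

theorem comp_proj_comm_of_comp_eq (hθ : adjoint θ ∘L θ = 1) {U : K →L[ℂ] K}
    (hU : adjoint U ∘L U = 1) {T T' : E →L[ℂ] E} (hT : T ∘L T' = 1) (h : U ∘L θ = θ ∘L T) :
    U ∘L (θ ∘L adjoint θ) = (θ ∘L adjoint θ) ∘L U := by
  have hadj : adjoint U ∘L θ = θ ∘L T' := by
    calc adjoint U ∘L θ = adjoint U ∘L (θ ∘L (T ∘L T')) := by rw [hT, one_def, comp_id]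
      _ = θ ∘L T' := by simp only [← comp_assoc, ← h, hU, one_def, id_comp]
  have hP : adjoint (θ ∘L adjoint θ) = θ ∘L adjoint θ := by
    rw [adjoint_comp, adjoint_adjoint]
  calc U ∘L (θ ∘L adjoint θ) = (θ ∘L adjoint θ) ∘L U ∘L (θ ∘L adjoint θ) :=
        (proj_comp_comp_proj_of_comp_eq hθ h).symm
    _ = adjoint ((θ ∘L adjoint θ) ∘L adjoint U ∘L (θ ∘L adjoint θ)) := by
        simp only [adjoint_comp, adjoint_adjoint, hP, comp_assoc]
    _ = (θ ∘L adjoint θ) ∘L U := by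
        rw [proj_comp_comp_proj_of_comp_eq hθ hadj, adjoint_comp, adjoint_adjoint, hP]

theorem exists_isUnit_comp_eq_of_comp_proj_comm (hθ : adjoint θ ∘L θ = 1) {U : K →L[ℂ] K}
    (hU : U ∈ unitary (K →L[ℂ] K)) (h : U ∘L (θ ∘L adjoint θ) = (θ ∘L adjoint θ) ∘L U) :
    ∃ T : E →L[ℂ] E, IsUnit T ∧ U ∘L θ = θ ∘L T := by
  have hU₁ : adjoint U ∘L U = 1 := Unitary.star_mul_self_of_mem hU
  have hU₂ : U ∘L adjoint U = 1 := Unitary.mul_star_self_of_mem hU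
  have hadj : adjoint U ∘L (θ ∘L adjoint θ) = (θ ∘L adjoint θ) ∘L adjoint U := by
    simpa only [adjoint_comp, adjoint_adjoint, comp_assoc] using (congrArg adjoint h).symm
  have hθP : (θ ∘L adjoint θ) ∘L θ = θ := by rw [comp_assoc, hθ, one_def, comp_id]
  refine ⟨adjoint θ ∘L U ∘L θ, ⟨⟨_, adjoint θ ∘L adjoint U ∘L θ, ?_, ?_⟩, rfl⟩, ?_⟩
  · calc (adjoint θ ∘L U ∘L θ) * (adjoint θ ∘L adjoint U ∘L θ)
          = adjoint θ ∘L (U ∘L (θ ∘L adjoint θ)) ∘L adjoint U ∘L θ := by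
            simp only [mul_def, comp_assoc]
      _ = adjoint θ ∘L (θ ∘L adjoint θ) ∘L (U ∘L adjoint U) ∘L θ := by
            rw [h]; simp only [comp_assoc]
      _ = 1 := by simp only [hU₂, ← comp_assoc, hθ, one_def, id_comp]
  · calc (adjoint θ ∘L adjoint U ∘L θ) * (adjoint θ ∘L U ∘L θ)
          = adjoint θ ∘L (adjoint U ∘L (θ ∘L adjoint θ)) ∘L U ∘L θ := by
            simp only [mul_def, comp_assoc]
      _ = adjoint θ ∘L (θ ∘L adjoint θ) ∘L (adjoint U ∘L U) ∘L θ := by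
            rw [hadj]; simp only [comp_assoc]
      _ = 1 := by simp only [hU₁, ← comp_assoc, hθ, one_def, id_comp]
  · calc U ∘L θ = (U ∘L (θ ∘L adjoint θ)) ∘L θ := by rw [comp_assoc, hθP]
      _ = θ ∘L (adjoint θ ∘L U ∘L θ) := by rw [h]; simp only [comp_assoc]

end RangeProjection

/-- Let `{A_j}` be a Parseval operator-valued frame with frame projection
`P_A = θ_A θ_A*` and let `R ∈ B(H₀)` be unitary, with `IR = I⊗R` on `K = ℓ²(J)⊗H₀`.
Then `{R A_j}` is right-similar to `{A_j}` (i.e. `R A_j = A_j T` for some invertible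
`T ∈ B(H)`) if and only if `I⊗R` commutes with `P_A`. -/
theorem stmt12
    {H H₀ K : Type*}
    [NormedAddCommGroup H] [InnerProductSpace ℂ H] [CompleteSpace H]
    [NormedAddCommGroup H₀] [InnerProductSpace ℂ H₀] [CompleteSpace H₀]
    [NormedAddCommGroup K] [InnerProductSpace ℂ K] [CompleteSpace K]
    {J : Type*}
    (L : J → (H₀ →L[ℂ] K))
    (hL1 : ∀ j, (adjoint (L j)) ∘L (L j) = (1 : H₀ →L[ℂ] H₀))
    (hL0 : ∀ i j, i ≠ j → (adjoint (L i)) ∘L (L j) = 0)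
    (hLsum : ∀ x : K, HasSum (fun j => L j ((adjoint (L j)) x)) x)
    (A : J → (H →L[ℂ] H₀))
    (θ : H →L[ℂ] K)
    (hθ : ∀ x, HasSum (fun j => L j (A j x)) (θ x))
    (hPars : adjoint θ ∘L θ = 1)
    (R : H₀ →L[ℂ] H₀) (hR₁ : adjoint R ∘L R = 1) (hR₂ : R ∘L adjoint R = 1)
    (IR : K →L[ℂ] K) (hIR : ∀ j, IR ∘L L j = L j ∘L R) :
    (∃ T : H →L[ℂ] H, IsUnit T ∧ ∀ j, R ∘L A j = A j ∘L T) ↔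
      IR ∘L (θ ∘L adjoint θ) = (θ ∘L adjoint θ) ∘L IR := by
  have hIR_unitary : IR ∈ unitary (K →L[ℂ] K) :=
    mem_unitary_of_comp_eq hL1 hL0 hLsum (Unitary.mem_iff.2 ⟨hR₁, hR₂⟩) hIR
  simp only [← comp_eq_comp_iff_forall_comp_eq hL1 hL0 hLsum hθ hIR]
  constructor
  · rintro ⟨T, hT, h⟩
    exact comp_proj_comm_of_comp_eq hPars (Unitary.star_mul_self_of_mem hIR_unitary)
      hT.mul_val_inv h
  · exact exists_isUnit_comp_eq_of_comp_proj_comm hPars hIR_unitary
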